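/- (Theorem 1, Part 1) Suppose F is mixed-monotone with respect to a decomposition function d, and let (a, â) : [0, ∞) → ℝⁿ × ℝⁿ be a solution of the deterministic embedding ODE (ȧ, ȧ̂) = e(a, â) with a(0) ⪯ â(0) and 0 ⪯_SE e(a(0), â(0)). Then for every T ≥ 0, the hyperrectangle [a(T), â(T)] is robustly forward invariant for ẋ = F(x, w): every solution x of ẋ = F(x, w(t)) under any piecewise continuous disturbance w valued in 𝒲 with x(0) ∈ [a(T), â(T)] satisfies x(t) ∈ [a(T), â(T)] for all t ≥ 0 in its interval of existence. -/

import Mathlib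

open Set Function Filter Topology

/-- A function is piecewise continuous on a set `s` if it is continuous on `s` off of
finitely many points. -/
def PiecewiseContinuousOn {α : Type*} [TopologicalSpace α] (w : ℝ → α) (s : Set ℝ) : Prop :=
  ∃ E : Finset ℝ, ContinuousOn w (s \ (E : Set ℝ))

/-- `d` is a decomposition function for the vector field `F` on state space `ℝⁿ` with
disturbance set `𝒲 = Set.Icc wl wu ⊆ ℝᵐ`:  `d` is locally Lipschitz, agrees with `F` on the
diagonal, `dᵢ` is nondecreasing in `xⱼ` for `j ≠ i`, nonincreasing in every component of `x̂`,
nondecreasing in every component of `w` and nonincreasing in every component of `ŵ`. -/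
def IsDecompositionFunction {n m : ℕ} (wl wu : Fin m → ℝ)
    (F : (Fin n → ℝ) → (Fin m → ℝ) → (Fin n → ℝ))
    (d : (Fin n → ℝ) → (Fin m → ℝ) → (Fin n → ℝ) → (Fin m → ℝ) → (Fin n → ℝ)) : Prop :=
  LocallyLipschitz
      (fun p : ((Fin n → ℝ) × (Fin m → ℝ)) × ((Fin n → ℝ) × (Fin m → ℝ)) =>
        d p.1.1 p.1.2 p.2.1 p.2.2)
    ∧ (∀ x : Fin n → ℝ, ∀ w ∈ Set.Icc wl wu, d x w x w = F x w)
    ∧ (∀ (i j : Fin n), j ≠ i → ∀ (x xh : Fin n → ℝ) (s t : ℝ), s ≤ t →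
        ∀ w ∈ Set.Icc wl wu, ∀ wh ∈ Set.Icc wl wu,
          d (Function.update x j s) w xh wh i ≤ d (Function.update x j t) w xh wh i)
    ∧ (∀ (i j : Fin n) (x xh : Fin n → ℝ) (s t : ℝ), s ≤ t →
        ∀ w ∈ Set.Icc wl wu, ∀ wh ∈ Set.Icc wl wu,
          d x w (Function.update xh j t) wh i ≤ d x w (Function.update xh j s) wh i)
    ∧ (∀ (i : Fin n) (k : Fin m) (x xh : Fin n → ℝ) (s t : ℝ),
        wl k ≤ s → s ≤ t → t ≤ wu k →
        ∀ w ∈ Set.Icc wl wu, ∀ wh ∈ Set.Icc wl wu,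
          d x (Function.update w k s) xh wh i ≤ d x (Function.update w k t) xh wh i)
    ∧ (∀ (i : Fin n) (k : Fin m) (x xh : Fin n → ℝ) (s t : ℝ),
        wl k ≤ s → s ≤ t → t ≤ wu k →
        ∀ w ∈ Set.Icc wl wu, ∀ wh ∈ Set.Icc wl wu,
          d x w xh (Function.update wh k t) i ≤ d x w xh (Function.update wh k s) i)

open scoped NNReal

/-!
The embedding system is cooperative for the southeast order `z ⪯ z'` (`z.1 ≤ z'.1`,
`z'.2 ≤ z.2`), so a Kamke-type comparison principle holds: a southeast sub-solution that starts
below a super-solution stays below it. For the southeast difference `Y` of the two, mixed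
monotonicity and the local Lipschitz bound on `d` give `g' ≤ K g` for the energy
`g = ∑ᵢ ((Yᵢ)⁻)²`, and Grönwall forces `g = 0`.

Comparing the stationary sub-solution `(a 0, â 0)` with `(a, â)`, and then `(a, â)` with its
time shifts, shows that `a` is nondecreasing and `â` nonincreasing. Every trajectory `x` of
`ẋ = F(x, w)` gives a super-solution `(x, x)`, so `x(0) ∈ [a T, â T]` yields
`a T ≤ a (T + t) ≤ x t ≤ â (T + t) ≤ â T`.
-/

theorem hasDerivAt_negPart_sq (x : ℝ) : HasDerivAt (fun y : ℝ => y⁻ ^ 2) (-2 * x⁻) x := by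
  rcases lt_trichotomy x 0 with hx | rfl | hx
  · have h : (fun y : ℝ => y⁻ ^ 2) =ᶠ[𝓝 x] fun y => y ^ 2 := by
      filter_upwards [Iio_mem_nhds hx] with y hy
      rw [negPart_eq_neg.mpr (le_of_lt hy), neg_sq]
    rw [negPart_eq_neg.mpr hx.le]
    simpa using (hasDerivAt_pow 2 x).congr_of_eventuallyEq h
  · rw [hasDerivAt_iff_isLittleO_nhds_zero]
    simp only [zero_add, negPart_zero, ne_eq, OfNat.ofNat_ne_zero, not_false_eq_true,
      zero_pow, sub_zero, mul_zero, smul_zero]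
    refine Asymptotics.IsBigO.trans_isLittleO (g := fun h : ℝ => h ^ 2) ?_
      (Asymptotics.isLittleO_pow_id one_lt_two)
    refine Asymptotics.IsBigO.of_bound 1 (Eventually.of_forall fun h => ?_)
    rw [one_mul, norm_pow, norm_pow, Real.norm_of_nonneg (negPart_nonneg h)]
    refine pow_le_pow_left₀ (negPart_nonneg h) ?_ 2
    rw [negPart_def]
    exact sup_le (neg_le_abs h) (abs_nonneg h)
  · have h : (fun y : ℝ => y⁻ ^ 2) =ᶠ[𝓝 x] fun _ => 0 := by
      filter_upwards [Ioi_mem_nhds hx] with y hy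
      simp [negPart_eq_zero.mpr (mem_Ioi.mp hy).le]
    rw [negPart_eq_zero.mpr hx.le]
    simpa using (hasDerivAt_const x (0 : ℝ)).congr_of_eventuallyEq h

theorem nonneg_of_deriv_ge_of_neg {ι : Type*} [Fintype ι] {Y Y' : ℝ → ι → ℝ} {T L : ℝ}
    (hL : 0 ≤ L) (hY : ∀ t ∈ Icc 0 T, ∀ i, HasDerivAt (fun s => Y s i) (Y' t i) t)
    (hY' : ∀ t ∈ Icc 0 T, ∀ M, (∀ j, -M ≤ Y t j) → ∀ i, Y t i < 0 → -(L * M) ≤ Y' t i)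
    (h0 : 0 ≤ Y 0) : ∀ t ∈ Icc 0 T, 0 ≤ Y t := by
  set g : ℝ → ℝ := fun t => ∑ i, (Y t i)⁻ ^ 2 with hg_def
  have hg_nonneg (t : ℝ) : 0 ≤ g t := by positivity
  have hg_single (t : ℝ) (i : ι) : (Y t i)⁻ ^ 2 ≤ g t :=
    Finset.single_le_sum (f := fun i => (Y t i)⁻ ^ 2) (fun _ _ => sq_nonneg _)
      (Finset.mem_univ i)
  have hg : ∀ t ∈ Icc 0 T, HasDerivAt g (∑ i, -2 * (Y t i)⁻ * Y' t i) t := fun t ht =>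
    HasDerivAt.fun_sum fun i _ =>
      (hasDerivAt_negPart_sq (Y t i)).comp (h₂ := fun y : ℝ => y⁻ ^ 2) t (hY t ht i)
  have hg' : ∀ t ∈ Ico 0 T,
      ∑ i, -2 * (Y t i)⁻ * Y' t i ≤ 2 * Fintype.card ι * L * g t + 0 := by
    intro t ht
    set M := √(g t)
    have hM (j : ι) : (Y t j)⁻ ≤ M :=
      (Real.le_sqrt (negPart_nonneg _) (hg_nonneg t)).mpr (hg_single t j)
    have hMsq : M ^ 2 = g t := Real.sq_sqrt (hg_nonneg t)
    have hterm (i : ι) : -2 * (Y t i)⁻ * Y' t i ≤ 2 * L * g t := by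
      rcases lt_or_ge (Y t i) 0 with hneg | hnonneg
      · have hYM : ∀ j, -M ≤ Y t j := fun j => neg_le.mp ((neg_le_negPart _).trans (hM j))
        have hrate := hY' t (Ico_subset_Icc_self ht) M hYM i hneg
        nlinarith [mul_le_mul_of_nonneg_left hrate (negPart_nonneg (Y t i)),
          mul_le_mul_of_nonneg_left (hM i) (mul_nonneg hL (Real.sqrt_nonneg (g t)))]
      · rw [negPart_eq_zero.mpr hnonneg]
        nlinarith [hg_nonneg t]
    calc ∑ i, -2 * (Y t i)⁻ * Y' t i ≤ ∑ _i : ι, 2 * L * g t :=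
          Finset.sum_le_sum fun i _ => hterm i
      _ = 2 * Fintype.card ι * L * g t + 0 := by
        rw [Finset.sum_const, Finset.card_univ, nsmul_eq_mul]; ring
  have hg_zero : ∀ t ∈ Icc 0 T, g t ≤ 0 := by
    intro t ht
    have h := le_gronwallBound_of_liminf_deriv_right_le (δ := 0)
      (fun s hs => (hg s hs).continuousAt.continuousWithinAt)
      (fun s hs _ hr => (hg s (Ico_subset_Icc_self hs)).hasDerivWithinAt.liminf_right_slope_le hr)
      (by simp [hg_def, negPart_eq_zero.mpr (h0 _)]) hg' t ht
    rwa [gronwallBound_ε0_δ0] at h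
  intro t ht i
  have hsq : (Y t i)⁻ ^ 2 = 0 := le_antisymm ((hg_single t i).trans (hg_zero t ht)) (sq_nonneg _)
  exact negPart_eq_zero.mp (pow_eq_zero_iff two_ne_zero |>.mp hsq)

theorem monotoneOn_Icc_of_update {ι α β : Type*} [Fintype ι] [DecidableEq ι] [Preorder α]
    [Preorder β] {g : (ι → α) → β} {l u : ι → α}
    (hg : ∀ z ∈ Icc l u, ∀ j s t, l j ≤ s → s ≤ t → t ≤ u j →
      g (update z j s) ≤ g (update z j t)) :
    MonotoneOn g (Icc l u) := by
  intro x hx y hy hxy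
  suffices h : ∀ S : Finset ι, g x ≤ g (S.piecewise y x) by
    simpa using h Finset.univ
  intro S
  induction S using Finset.induction_on with
  | empty => simp
  | insert j S hj ih =>
    have hmem : S.piecewise y x ∈ Icc l u := Finset.piecewise_mem_Icc_of_mem_of_mem _ hy hx
    calc g x ≤ g (S.piecewise y x) := ih
      _ = g (update (S.piecewise y x) j (x j)) := by
        rw [← S.piecewise_eq_of_notMem y x hj, update_eq_self]
      _ ≤ g (update (S.piecewise y x) j (y j)) := hg _ hmem j _ _ (hx.1 j) (hxy j) (hy.2 j)
      _ = g ((insert j S).piecewise y x) := by rw [Finset.piecewise_insert]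

/-- The order `z ⪯_SE z'` of the paper. -/
def SoutheastLE {α : Type*} [Preorder α] (z z' : α × α) : Prop := z.1 ≤ z'.1 ∧ z'.2 ≤ z.2

def southeastDiff {ι : Type*} (z z' : (ι → ℝ) × (ι → ℝ)) : ι ⊕ ι → ℝ :=
  Sum.elim (z'.1 - z.1) (z.2 - z'.2)

theorem southeastLE_iff_nonneg_southeastDiff {ι : Type*} {z z' : (ι → ℝ) × (ι → ℝ)} :
    SoutheastLE z z' ↔ 0 ≤ southeastDiff z z' := by
  simp only [SoutheastLE, southeastDiff, Pi.le_def, Sum.forall, Sum.elim_inl, Sum.elim_inr,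
    Pi.zero_apply, Pi.sub_apply, sub_nonneg]

theorem hasDerivAt_southeastDiff {ι : Type*} [Fintype ι] {p q : ℝ → (ι → ℝ) × (ι → ℝ)}
    {p' q' : (ι → ℝ) × (ι → ℝ)} {t : ℝ} (hp : HasDerivAt p p' t) (hq : HasDerivAt q q' t)
    (i : ι ⊕ ι) : HasDerivAt (fun s => southeastDiff (p s) (q s) i) (southeastDiff p' q' i) t := by
  have hp₁ : HasDerivAt (fun s => (p s).1) p'.1 t := hp.fst
  have hp₂ : HasDerivAt (fun s => (p s).2) p'.2 t := hp.snd
  have hq₁ : HasDerivAt (fun s => (q s).1) q'.1 t := hq.fst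
  have hq₂ : HasDerivAt (fun s => (q s).2) q'.2 t := hq.snd
  rcases i with i | i
  · exact hasDerivAt_pi.mp (hq₁.sub hp₁) i
  · exact hasDerivAt_pi.mp (hp₂.sub hq₂) i

theorem isSublattice_Icc {α : Type*} [Lattice α] {a b : α} : IsSublattice (Icc a b) :=
  ⟨fun _ hx _ hy => ⟨le_sup_of_le_left hx.1, sup_le hx.2 hy.2⟩,
    fun _ hx _ hy => ⟨le_inf hx.1 hy.1, inf_le_of_left_le hx.2⟩⟩

section EmbeddingSystem

variable {n m : ℕ} {wl wu : Fin m → ℝ} {F : (Fin n → ℝ) → (Fin m → ℝ) → (Fin n → ℝ)}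
  {d : (Fin n → ℝ) → (Fin m → ℝ) → (Fin n → ℝ) → (Fin m → ℝ) → (Fin n → ℝ)}

/-- The vector field `e` of the deterministic embedding system. -/
def embeddingField (wl wu : Fin m → ℝ)
    (d : (Fin n → ℝ) → (Fin m → ℝ) → (Fin n → ℝ) → (Fin m → ℝ) → (Fin n → ℝ))
    (z : (Fin n → ℝ) × (Fin n → ℝ)) : (Fin n → ℝ) × (Fin n → ℝ) :=
  (d z.1 wl z.2 wu, d z.2 wu z.1 wl)

namespace IsDecompositionFunction

theorem apply_le_apply (hd : IsDecompositionFunction wl wu F d) {w wh : Fin m → ℝ}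
    (hw : w ∈ Icc wl wu) (hwh : wh ∈ Icc wl wu) {x x' xh xh' : Fin n → ℝ} (i : Fin n)
    (hx : x ≤ x') (hxi : x i = x' i) (hxh : xh' ≤ xh) :
    d x w xh wh i ≤ d x' w xh' wh i := by
  obtain ⟨-, -, hmono, hanti, -, -⟩ := hd
  have h₁ : d x w xh wh i ≤ d x' w xh wh i := by
    refine monotoneOn_Icc_of_update (g := fun z => d z w xh wh i) ?_
      (left_mem_Icc.mpr hx) (right_mem_Icc.mpr hx) hx
    intro z _ j s t hs hst ht
    rcases eq_or_ne j i with rfl | hji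
    · rw [le_antisymm hst (ht.trans (hxi ▸ hs))]
    · exact hmono i j hji z xh s t hst w hw wh hwh
  have h₂ : d x' w xh wh i ≤ d x' w xh' wh i := by
    have := monotoneOn_Icc_of_update (g := fun z => -d x' w z wh i)
      (fun z _ j s t _ hst _ => neg_le_neg (hanti i j x' z s t hst w hw wh hwh))
      (left_mem_Icc.mpr hxh) (right_mem_Icc.mpr hxh) hxh
    exact neg_le_neg_iff.mp this
  exact h₁.trans h₂

theorem apply_le_apply_of_disturbance (hd : IsDecompositionFunction wl wu F d)
    (x xh : Fin n → ℝ) {w w' wh wh' : Fin m → ℝ} (hw : w ∈ Icc wl wu) (hw' : w' ∈ Icc wl wu)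
    (hwh : wh ∈ Icc wl wu) (hwh' : wh' ∈ Icc wl wu) (hww' : w ≤ w') (hwh'wh : wh' ≤ wh)
    (i : Fin n) : d x w xh wh i ≤ d x w' xh wh' i := by
  obtain ⟨-, -, -, -, hmono, hanti⟩ := hd
  have h₁ : d x w xh wh i ≤ d x w' xh wh i :=
    monotoneOn_Icc_of_update (g := fun z => d x z xh wh i)
      (fun z hz k s t hs hst ht => hmono i k x xh s t hs hst ht z hz wh hwh) hw hw' hww'
  have h₂ : -d x w' xh wh' i ≤ -d x w' xh wh i :=
    monotoneOn_Icc_of_update (g := fun z => -d x w' xh z i)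
      (fun z hz k s t hs hst ht => neg_le_neg (hanti i k x xh s t hs hst ht w' hw' z hz))
      hwh' hwh hwh'wh
  exact h₁.trans (neg_le_neg_iff.mp h₂)

theorem apply_le_apply_add_mul (hd : IsDecompositionFunction wl wu F d) {w wh : Fin m → ℝ}
    (hw : w ∈ Icc wl wu) (hwh : wh ∈ Icc wl wu)
    {K : Set (((Fin n → ℝ) × (Fin m → ℝ)) × ((Fin n → ℝ) × (Fin m → ℝ)))} {L : ℝ≥0}
    (hL : LipschitzOnWith L (fun p => d p.1.1 p.1.2 p.2.1 p.2.2) K)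
    {u uh v vh : Fin n → ℝ} {M : ℝ} (i : Fin n) (hi : v i ≤ u i)
    (hM : ∀ j, u j - v j ≤ M) (hMh : ∀ j, vh j - uh j ≤ M)
    (hK : ((v, w), (vh, wh)) ∈ K) (hK' : ((v ⊔ u, w), (vh ⊓ uh, wh)) ∈ K) :
    d u w uh wh i ≤ d v w vh wh i + L * M := by
  have hM0 : 0 ≤ M := by linarith [hM i]
  have hmono : d u w uh wh i ≤ d (v ⊔ u) w (vh ⊓ uh) wh i :=
    hd.apply_le_apply hw hwh i le_sup_right (by simp [hi]) inf_le_right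
  have hdist : dist ((v, w), (vh, wh)) ((v ⊔ u, w), (vh ⊓ uh, wh)) ≤ M := by
    simp only [Prod.dist_eq, dist_self, max_le_iff, and_true, hM0]
    constructor <;> refine (dist_pi_le_iff hM0).mpr fun j => ?_ <;>
      simp only [Pi.sup_apply, Pi.inf_apply, Real.dist_eq, abs_le]
    · have : max (v j) (u j) ≤ v j + M := max_le (by linarith) (by linarith [hM j])
      constructor <;> linarith [le_max_left (v j) (u j)]
    · have : vh j - M ≤ min (vh j) (uh j) := le_min (by linarith) (by linarith [hMh j])
      constructor <;> linarith [min_le_left (vh j) (uh j)]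
  have hlip : dist (d v w vh wh) (d (v ⊔ u) w (vh ⊓ uh) wh) ≤ L * M :=
    (hL.dist_le_mul _ hK _ hK').trans (mul_le_mul_of_nonneg_left hdist L.2)
  have hcoord := (dist_le_pi_dist _ _ i).trans hlip
  rw [Real.dist_eq, abs_le] at hcoord
  linarith [hcoord.1]

theorem neg_mul_le_southeastDiff (hd : IsDecompositionFunction wl wu F d) (hwlu : wl ≤ wu)
    {B : Set (Fin n → ℝ)} (hB : IsSublattice B) {L : ℝ≥0}
    (hL : LipschitzOnWith L (fun p => d p.1.1 p.1.2 p.2.1 p.2.2)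
      ((B ×ˢ Icc wl wu) ×ˢ (B ×ˢ Icc wl wu)))
    {z z' dz dz' : (Fin n → ℝ) × (Fin n → ℝ)} (hz : z ∈ B ×ˢ B) (hz' : z' ∈ B ×ˢ B)
    (hsub : SoutheastLE dz (embeddingField wl wu d z))
    (hsuper : SoutheastLE (embeddingField wl wu d z') dz')
    {M : ℝ} (hM : ∀ j, -M ≤ southeastDiff z z' j) {i : Fin n ⊕ Fin n}
    (hi : southeastDiff z z' i < 0) : -(L * M) ≤ southeastDiff dz dz' i := by
  have hwl : wl ∈ Icc wl wu := left_mem_Icc.mpr hwlu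
  have hwu : wu ∈ Icc wl wu := right_mem_Icc.mpr hwlu
  have hM₁ (j : Fin n) : -M ≤ z'.1 j - z.1 j := hM (.inl j)
  have hM₂ (j : Fin n) : -M ≤ z.2 j - z'.2 j := hM (.inr j)
  rcases i with i | i
  · have hi : z'.1 i < z.1 i := sub_neg.mp hi
    have key := hd.apply_le_apply_add_mul hwl hwu hL (M := M) i hi.le
      (fun j => by linarith [hM₁ j]) (fun j => by linarith [hM₂ j])
      ⟨⟨hz'.1, hwl⟩, ⟨hz'.2, hwu⟩⟩
      ⟨⟨hB.supClosed hz'.1 hz.1, hwl⟩, ⟨hB.infClosed hz'.2 hz.2, hwu⟩⟩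
    have := hsub.1 i
    have := hsuper.1 i
    simp only [southeastDiff, embeddingField, Sum.elim_inl, Pi.sub_apply] at *
    linarith
  · have hi : z.2 i < z'.2 i := sub_neg.mp hi
    have key := hd.apply_le_apply_add_mul hwu hwl hL (M := M) i hi.le
      (fun j => by linarith [hM₂ j]) (fun j => by linarith [hM₁ j])
      ⟨⟨hz.2, hwu⟩, ⟨hz.1, hwl⟩⟩
      ⟨⟨hB.supClosed hz.2 hz'.2, hwu⟩, ⟨hB.infClosed hz.1 hz'.1, hwl⟩⟩
    have := hsub.2 i
    have := hsuper.2 i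
    simp only [southeastDiff, embeddingField, Sum.elim_inr, Pi.sub_apply] at *
    linarith

theorem southeastLE_of_sub_super (hd : IsDecompositionFunction wl wu F d) (hwlu : wl ≤ wu)
    {T : ℝ} {p p' q q' : ℝ → (Fin n → ℝ) × (Fin n → ℝ)}
    (hp : ∀ t ∈ Icc 0 T, HasDerivAt p (p' t) t) (hq : ∀ t ∈ Icc 0 T, HasDerivAt q (q' t) t)
    (hp_sub : ∀ t ∈ Icc 0 T, SoutheastLE (p' t) (embeddingField wl wu d (p t)))
    (hq_super : ∀ t ∈ Icc 0 T, SoutheastLE (embeddingField wl wu d (q t)) (q' t))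
    (h0 : SoutheastLE (p 0) (q 0)) : ∀ t ∈ Icc 0 T, SoutheastLE (p t) (q t) := by
  obtain ⟨C, hC⟩ := isCompact_Icc.exists_bound_of_continuousOn (f := fun t => (p t, q t))
    fun t ht => ((hp t ht).prodMk (hq t ht)).continuousAt.continuousWithinAt
  -- a box is a compact sublattice, so it can hold all points where `d` is compared
  set B : Set (Fin n → ℝ) := Icc (fun _ => -C) (fun _ => C)
  have mem_B (v : Fin n → ℝ) (hv : ‖v‖ ≤ C) : v ∈ B := by
    refine ⟨fun j => ?_, fun j => ?_⟩ <;>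
    · have hj := (norm_le_pi_norm v j).trans hv
      rw [Real.norm_eq_abs, abs_le] at hj
      linarith [hj.1, hj.2]
  have mem_BB (z : (Fin n → ℝ) × (Fin n → ℝ)) (hz : ‖z‖ ≤ C) : z ∈ B ×ˢ B :=
    ⟨mem_B _ ((norm_fst_le z).trans hz), mem_B _ ((norm_snd_le z).trans hz)⟩
  have hp_mem (t : ℝ) (ht : t ∈ Icc 0 T) : p t ∈ B ×ˢ B :=
    mem_BB _ ((norm_fst_le (p t, q t)).trans (hC t ht))
  have hq_mem (t : ℝ) (ht : t ∈ Icc 0 T) : q t ∈ B ×ˢ B :=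
    mem_BB _ ((norm_snd_le (p t, q t)).trans (hC t ht))
  obtain ⟨L, hL⟩ := hd.1.locallyLipschitzOn.exists_lipschitzOnWith_of_compact
    ((isCompact_Icc.prod isCompact_Icc).prod (isCompact_Icc.prod isCompact_Icc) :
      IsCompact ((B ×ˢ Icc wl wu) ×ˢ (B ×ˢ Icc wl wu)))
  have hY := nonneg_of_deriv_ge_of_neg (T := T) L.2
    (fun t ht => hasDerivAt_southeastDiff (hp t ht) (hq t ht))
    (fun t ht M hM i hi => hd.neg_mul_le_southeastDiff hwlu isSublattice_Icc hL
      (hp_mem t ht) (hq_mem t ht) (hp_sub t ht) (hq_super t ht) hM hi)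
    (southeastLE_iff_nonneg_southeastDiff.mp h0)
  exact fun t ht => southeastLE_iff_nonneg_southeastDiff.mpr (hY t ht)

theorem embeddingField_diag_southeastLE (hd : IsDecompositionFunction wl wu F d) (hwlu : wl ≤ wu)
    (x : Fin n → ℝ) {w : Fin m → ℝ} (hw : w ∈ Icc wl wu) :
    SoutheastLE (embeddingField wl wu d (x, x)) (F x w, F x w) := by
  have hwl : wl ∈ Icc wl wu := left_mem_Icc.mpr hwlu
  have hwu : wu ∈ Icc wl wu := right_mem_Icc.mpr hwlu
  rw [← hd.2.1 x w hw]
  exact ⟨hd.apply_le_apply_of_disturbance x x hwl hw hwu hw hw.1 hw.2,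
    hd.apply_le_apply_of_disturbance x x hw hwu hw hwl hw.2 hw.1⟩

theorem solution_southeastLE_of_le (hd : IsDecompositionFunction wl wu F d) (hwlu : wl ≤ wu)
    {z : ℝ → (Fin n → ℝ) × (Fin n → ℝ)}
    (hz : ∀ t ∈ Ici (0 : ℝ), HasDerivAt z (embeddingField wl wu d (z t)) t)
    (h0 : SoutheastLE 0 (embeddingField wl wu d (z 0))) {s t : ℝ} (hs : 0 ≤ s) (hst : s ≤ t) :
    SoutheastLE (z s) (z t) := by
  have hstart (r : ℝ) (hr : 0 ≤ r) : SoutheastLE (z 0) (z r) :=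
    hd.southeastLE_of_sub_super hwlu (p := fun _ => z 0) (p' := fun _ => 0)
      (fun r _ => hasDerivAt_const r (z 0)) (fun r hr => hz r hr.1) (fun _ _ => h0)
      (fun _ _ => ⟨le_rfl, le_rfl⟩) ⟨le_rfl, le_rfl⟩ r ⟨hr, le_rfl⟩
  have hshift := hd.southeastLE_of_sub_super hwlu (T := s) (q := fun r => z (r + (t - s)))
    (fun r hr => hz r hr.1)
    (fun r hr => (hz (r + (t - s)) (by simp only [mem_Ici]; linarith [hr.1])).comp_add_const r _)
    (fun _ _ => ⟨le_rfl, le_rfl⟩) (fun _ _ => ⟨le_rfl, le_rfl⟩)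
    (by simpa using hstart (t - s) (by linarith)) s ⟨hs, le_rfl⟩
  simpa using hshift

end IsDecompositionFunction

end EmbeddingSystem

theorem thm1_part1_robust_forward_invariance_general
    {n m : ℕ} (wl wu : Fin m → ℝ) (hwlu : wl ≤ wu)
    (F : (Fin n → ℝ) → (Fin m → ℝ) → (Fin n → ℝ))
    (d : (Fin n → ℝ) → (Fin m → ℝ) → (Fin n → ℝ) → (Fin m → ℝ) → (Fin n → ℝ))
    (hd : IsDecompositionFunction wl wu F d)
    -- (a, ah) solves the deterministic embedding ODE on [0, ∞)
    (a ah : ℝ → (Fin n → ℝ))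
    (ha : ∀ t ∈ Set.Ici (0:ℝ), HasDerivAt a (d (a t) wl (ah t) wu) t)
    (hah : ∀ t ∈ Set.Ici (0:ℝ), HasDerivAt ah (d (ah t) wu (a t) wl) t)
    -- (a 0, ah 0) ∈ 𝒮, i.e. a 0 ⪯ ah 0 and 0 ⪯_SE e(a 0, ah 0)
    (h0SE : (0 : Fin n → ℝ) ≤ d (a 0) wl (ah 0) wu ∧ d (ah 0) wu (a 0) wl ≤ (0 : Fin n → ℝ)) :
    ∀ T : ℝ, 0 ≤ T →
      ∀ T' : ℝ, 0 ≤ T' →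
        ∀ (x : ℝ → (Fin n → ℝ)) (w : ℝ → (Fin m → ℝ)),
          (∀ t ∈ Set.Icc (0:ℝ) T', w t ∈ Set.Icc wl wu) →
          PiecewiseContinuousOn w (Set.Icc 0 T') →
          (∀ t ∈ Set.Icc (0:ℝ) T', HasDerivAt x (F (x t) (w t)) t) →
          x 0 ∈ Set.Icc (a T) (ah T) →
          ∀ t ∈ Set.Icc (0:ℝ) T', x t ∈ Set.Icc (a T) (ah T) := by
  intro T hT T' _ x w hw _ hx hx0 t ht
  set z : ℝ → (Fin n → ℝ) × (Fin n → ℝ) := fun t => (a t, ah t)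
  have hz (s : ℝ) (hs : s ∈ Ici (0 : ℝ)) : HasDerivAt z (embeddingField wl wu d (z s)) s :=
    (ha s hs).prodMk (hah s hs)
  have hmono : SoutheastLE (z T) (z (T + t)) :=
    hd.solution_southeastLE_of_le hwlu hz h0SE hT (by linarith [ht.1])
  have hbox : SoutheastLE (z (T + t)) (x t, x t) :=
    hd.southeastLE_of_sub_super hwlu (p := fun r => z (T + r)) (q := fun r => (x r, x r))
      (fun r hr => (hz (T + r) (by simp only [mem_Ici]; linarith [hr.1])).comp_const_add T r)
      (fun r hr => (hx r hr).prodMk (hx r hr)) (fun _ _ => ⟨le_rfl, le_rfl⟩)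
      (fun r hr => hd.embeddingField_diag_southeastLE hwlu (x r) (hw r hr))
      (by simpa [SoutheastLE, z] using hx0) t ht
  exact ⟨hmono.1.trans hbox.1, hbox.2.trans hmono.2⟩

/-- Theorem 1, Part 1: if `(a, â)` solves the deterministic embedding ODE
with `(a(0), â(0)) ∈ 𝒮`, then for every `T ≥ 0` the hyperrectangle `[a(T), â(T)]` is
robustly forward invariant for `ẋ = F(x, w)`: every solution under any piecewise
continuous disturbance valued in `𝒲` that starts in `[a(T), â(T)]` remains there. -/
theorem thm1_part1_robust_forward_invariance
    {n m : ℕ} (wl wu : Fin m → ℝ) (hwlu : wl ≤ wu)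
    (F : (Fin n → ℝ) → (Fin m → ℝ) → (Fin n → ℝ))
    (d : (Fin n → ℝ) → (Fin m → ℝ) → (Fin n → ℝ) → (Fin m → ℝ) → (Fin n → ℝ))
    (hd : IsDecompositionFunction wl wu F d)
    -- (a, ah) solves the deterministic embedding ODE on [0, ∞)
    (a ah : ℝ → (Fin n → ℝ))
    (ha : ∀ t ∈ Set.Ici (0:ℝ), HasDerivAt a (d (a t) wl (ah t) wu) t)
    (hah : ∀ t ∈ Set.Ici (0:ℝ), HasDerivAt ah (d (ah t) wu (a t) wl) t)
    -- (a 0, ah 0) ∈ 𝒮, i.e. a 0 ⪯ ah 0 and 0 ⪯_SE e(a 0, ah 0)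
    (h0tri : a 0 ≤ ah 0)
    (h0SE : (0 : Fin n → ℝ) ≤ d (a 0) wl (ah 0) wu ∧ d (ah 0) wu (a 0) wl ≤ (0 : Fin n → ℝ)) :
    ∀ T : ℝ, 0 ≤ T →
      ∀ T' : ℝ, 0 ≤ T' →
        ∀ (x : ℝ → (Fin n → ℝ)) (w : ℝ → (Fin m → ℝ)),
          (∀ t ∈ Set.Icc (0:ℝ) T', w t ∈ Set.Icc wl wu) →
          PiecewiseContinuousOn w (Set.Icc 0 T') →
          (∀ t ∈ Set.Icc (0:ℝ) T', HasDerivAt x (F (x t) (w t)) t) →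
          x 0 ∈ Set.Icc (a T) (ah T) →
          ∀ t ∈ Set.Icc (0:ℝ) T', x t ∈ Set.Icc (a T) (ah T) :=
  thm1_part1_robust_forward_invariance_general wl wu hwlu F d hd a ah ha hah h0SE
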